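/- arXiv:math-ph/0608069 — 2 statements merged into one kernel-verified Lean document; each statement's English description precedes it below -/
import Mathlib

section
/- Let ℓ : ℝ³ → (0,∞) be twice continuously differentiable and let L₊ = sup_p sup_{|q|=1} (q·∇)² ℓ(p) be finite. Define ω(p) = (e^{ℓ(p)} − 1)^{−1} and, for q ∈ ℝ³, h_q(p) = ln( (2 + ω(p+q) + ω(p−q)) / (ω(p+q) + ω(p−q)) ). Then for all p, q ∈ ℝ³: h_q(p) − h₀(p) ≤ L₊ |q|². (Note h₀(p) = ℓ(p).) -/
/-!
The Bose function `ω x = (eˣ - 1)⁻¹` is midpoint convex on `(0, ∞)`, so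
`ω (ℓ (p + q)) + ω (ℓ (p - q)) ≥ 2 ω m` with `m` the average of `ℓ (p ± q)`; since
`1 + 1 / ω x = eˣ`, this gives `h_q(p) ≤ m`, with equality `h₀ = ℓ`. Along the line `t ↦ p + t q`
the function `L₊ ‖q‖² t² / 2 - ℓ` is convex, whence `m - ℓ p ≤ L₊ ‖q‖² / 2`. Finally `L₊ ≥ 0`,
since a positive function cannot have second derivative `≤ L₊ < 0` along a whole line.
-/

/-- The Bose occupation number ω(x) = (e^x − 1)⁻¹. -/
noncomputable def boseOcc (x : ℝ) : ℝ := (Real.exp x - 1)⁻¹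

/-- h_q(p) = ln((2 + ω(ℓ(p+q)) + ω(ℓ(p−q)))/(ω(ℓ(p+q)) + ω(ℓ(p−q)))); note h₀ = ℓ. -/
noncomputable def hSym (ℓ : EuclideanSpace ℝ (Fin 3) → ℝ)
    (q p : EuclideanSpace ℝ (Fin 3)) : ℝ :=
  Real.log ((2 + boseOcc (ℓ (p + q)) + boseOcc (ℓ (p - q))) /
    (boseOcc (ℓ (p + q)) + boseOcc (ℓ (p - q))))

theorem boseOcc_pos {x : ℝ} (hx : 0 < x) : 0 < boseOcc x :=
  inv_pos.mpr (sub_pos.mpr (Real.one_lt_exp_iff.mpr hx))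

theorem one_add_inv_boseOcc (x : ℝ) : 1 + (boseOcc x)⁻¹ = Real.exp x := by
  rw [boseOcc, inv_inv, add_sub_cancel]

theorem two_mul_boseOcc_midpoint_le {a b : ℝ} (ha : 0 < a) (hb : 0 < b) :
    2 * boseOcc ((a + b) / 2) ≤ boseOcc a + boseOcc b := by
  have hα : 1 < Real.exp a := Real.one_lt_exp_iff.mpr ha
  have hβ : 1 < Real.exp b := Real.one_lt_exp_iff.mpr hb
  have hs : 1 < Real.exp ((a + b) / 2) := Real.one_lt_exp_iff.mpr (by linarith)
  have hsq : Real.exp ((a + b) / 2) ^ 2 = Real.exp a * Real.exp b := by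
    rw [← Real.exp_nat_mul, ← Real.exp_add]; ring_nf
  set α := Real.exp a
  set β := Real.exp b
  set s := Real.exp ((a + b) / 2)
  have hAMGM : 2 * s ≤ α + β := by nlinarith [sq_nonneg (α - β), sq_nonneg (α + β - 2 * s)]
  simp only [boseOcc]
  -- with denominators cleared and `s² = αβ`, the claim becomes `0 ≤ (s + 1) (α + β - 2 s)`
  rw [← div_eq_mul_inv, inv_add_inv (by linarith) (by linarith),
    div_le_div_iff₀ (by linarith) (by nlinarith)]
  nlinarith [mul_nonneg (by linarith : (0:ℝ) ≤ s + 1) (by linarith : (0:ℝ) ≤ α + β - 2 * s)]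

theorem log_boseOcc_ratio_le_midpoint {a b : ℝ} (ha : 0 < a) (hb : 0 < b) :
    Real.log ((2 + boseOcc a + boseOcc b) / (boseOcc a + boseOcc b)) ≤ (a + b) / 2 := by
  have hm : 0 < boseOcc ((a + b) / 2) := boseOcc_pos (by linarith)
  have hW := two_mul_boseOcc_midpoint_le ha hb
  have hW0 : 0 < boseOcc a + boseOcc b := by linarith
  have hratio : (2 + boseOcc a + boseOcc b) / (boseOcc a + boseOcc b)
      ≤ Real.exp ((a + b) / 2) := by
    calc (2 + boseOcc a + boseOcc b) / (boseOcc a + boseOcc b)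
        = 1 + 2 / (boseOcc a + boseOcc b) := by field_simp; ring
      _ ≤ 1 + 2 / (2 * boseOcc ((a + b) / 2)) := by gcongr
      _ = Real.exp ((a + b) / 2) := by
        rw [← one_add_inv_boseOcc]; field_simp
  calc _ ≤ Real.log (Real.exp ((a + b) / 2)) :=
        Real.log_le_log (div_pos (by linarith) hW0) hratio
    _ = (a + b) / 2 := Real.log_exp _

theorem hSym_zero {ℓ : EuclideanSpace ℝ (Fin 3) → ℝ} {p : EuclideanSpace ℝ (Fin 3)}
    (hp : 0 < ℓ p) : hSym ℓ 0 p = ℓ p := by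
  have hω : boseOcc (ℓ p) ≠ 0 := (boseOcc_pos hp).ne'
  have : (2 + boseOcc (ℓ p) + boseOcc (ℓ p)) / (boseOcc (ℓ p) + boseOcc (ℓ p))
      = 1 + (boseOcc (ℓ p))⁻¹ := by field_simp; ring
  rw [hSym, add_zero, sub_zero, this, one_add_inv_boseOcc, Real.log_exp]

theorem second_diff_le_of_hasDerivAt {g g' g'' : ℝ → ℝ} {C : ℝ}
    (hg : ∀ t, HasDerivAt g (g' t) t) (hg' : ∀ t, HasDerivAt g' (g'' t) t)
    (hC : ∀ t, g'' t ≤ C) : g 1 + g (-1) - 2 * g 0 ≤ C := by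
  have hφ : ∀ t, HasDerivAt (fun t => C * t ^ 2 / 2 - g t) (C * t - g' t) t := fun t => by
    refine ((((hasDerivAt_pow 2 t).const_mul C).div_const 2).fun_sub (hg t)).congr_deriv ?_
    push_cast; ring
  have hφ' : ∀ t, HasDerivAt (fun t => C * t - g' t) (C - g'' t) t := fun t => by
    simpa using ((hasDerivAt_id t).const_mul C).fun_sub (hg' t)
  have hconv : ConvexOn ℝ Set.univ (fun t => C * t ^ 2 / 2 - g t) := by
    refine convexOn_of_hasDerivWithinAt2_nonneg (f' := fun t => C * t - g' t) convex_univ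
      (fun t _ => (hφ t).continuousAt.continuousWithinAt) ?_ ?_ (fun t _ => sub_nonneg.mpr (hC t))
    · simpa only [interior_univ, hasDerivWithinAt_univ] using fun t _ => hφ t
    · simpa only [interior_univ, hasDerivWithinAt_univ] using fun t _ => hφ' t
  have h := hconv.2 (Set.mem_univ 1) (Set.mem_univ (-1)) (by norm_num : (0:ℝ) ≤ 1 / 2)
    (by norm_num : (0:ℝ) ≤ 1 / 2) (by norm_num)
  norm_num at h
  linarith

section SecondDifference

variable {E : Type*} [NormedAddCommGroup E] [NormedSpace ℝ E]

theorem DifferentiableAt.hasDerivAt_comp_line {F : Type*} [NormedAddCommGroup F] [NormedSpace ℝ F]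
    {f : E → F} {p v : E} {t : ℝ} (hf : DifferentiableAt ℝ f (p + t • v)) :
    HasDerivAt (fun s : ℝ => f (p + s • v)) (fderiv ℝ f (p + t • v) v) t := by
  have hline : HasDerivAt (fun s : ℝ => p + s • v) v t := by
    simpa using ((hasDerivAt_id t).smul_const v).const_add p
  exact hf.hasFDerivAt.comp_hasDerivAt t hline

theorem ContDiff.hasDerivAt_fderiv_comp_line {f : E → ℝ} (hf : ContDiff ℝ 2 f) (p v : E) (t : ℝ) :
    HasDerivAt (fun s : ℝ => fderiv ℝ f (p + s • v) v)
      (fderiv ℝ (fderiv ℝ f) (p + t • v) v v) t := by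
  have hDf : Differentiable ℝ (fderiv ℝ f) :=
    (hf.fderiv_right (m := 1) one_add_one_eq_two.le).differentiable one_ne_zero
  have hDfv : HasFDerivAt (fun x => fderiv ℝ f x v)
      ((fderiv ℝ (fderiv ℝ f) (p + t • v)).flip v) (p + t • v) := by
    simpa using (hDf (p + t • v)).hasFDerivAt.clm_apply (hasFDerivAt_const v (p + t • v))
  exact hDfv.differentiableAt.hasDerivAt_comp_line.congr_deriv (by rw [hDfv.fderiv]; rfl)

theorem second_diff_le_of_fderiv_fderiv_le {f : E → ℝ} (hf : ContDiff ℝ 2 f) {C : ℝ} (p v : E)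
    (hC : ∀ x, fderiv ℝ (fderiv ℝ f) x v v ≤ C) : f (p + v) + f (p - v) - 2 * f p ≤ C := by
  have := second_diff_le_of_hasDerivAt
    (fun t => ((hf.differentiable two_ne_zero) (p + t • v)).hasDerivAt_comp_line)
    (hf.hasDerivAt_fderiv_comp_line p v) (fun t => hC _)
  simpa [← sub_eq_add_neg] using this

theorem ContinuousLinearMap.apply_self_le_mul_norm_sq (B : E →L[ℝ] E →L[ℝ] ℝ) {L : ℝ}
    (hB : ∀ u, ‖u‖ = 1 → B u u ≤ L) (q : E) : B q q ≤ L * ‖q‖ ^ 2 := by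
  rcases eq_or_ne q 0 with rfl | hq
  · simp
  have hn : 0 < ‖q‖ := norm_pos_iff.mpr hq
  have h := hB (‖q‖⁻¹ • q) (norm_smul_inv_norm hq)
  simp only [map_smul, FunLike.coe_smul, Pi.smul_apply, smul_eq_mul] at h
  calc B q q = ‖q‖ ^ 2 * (‖q‖⁻¹ * (‖q‖⁻¹ * B q q)) := by field_simp
    _ ≤ ‖q‖ ^ 2 * L := by gcongr
    _ = L * ‖q‖ ^ 2 := mul_comm _ _

theorem nonneg_of_forall_lt_add_mul_sq {c L : ℝ} (h : ∀ t : ℝ, 0 < c + L * t ^ 2) : 0 ≤ L := by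
  by_contra! hL
  have hc := h 0
  have := h (Real.sqrt ((c + 1) / -L))
  rw [Real.sq_sqrt (div_nonneg (by linarith) (by linarith)), mul_div_assoc', div_neg,
    mul_div_cancel_left₀ _ hL.ne] at this
  linarith

theorem nonneg_of_pos_of_fderiv_fderiv_le [Nontrivial E] {f : E → ℝ} (hf : ContDiff ℝ 2 f)
    (hpos : ∀ x, 0 < f x) {L : ℝ}
    (hL : ∀ x u, ‖u‖ = 1 → fderiv ℝ (fderiv ℝ f) x u u ≤ L) : 0 ≤ L := by
  obtain ⟨u, hu⟩ := exists_norm_eq E zero_le_one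
  refine nonneg_of_forall_lt_add_mul_sq (c := 2 * f 0) fun t => ?_
  have h := second_diff_le_of_fderiv_fderiv_le hf 0 (t • u)
    (fun x => (fderiv ℝ (fderiv ℝ f) x).apply_self_le_mul_norm_sq (hL x) (t • u))
  rw [norm_smul, hu, mul_one, Real.norm_eq_abs, sq_abs] at h
  linarith [hpos (0 + t • u), hpos (0 - t • u)]

end SecondDifference

/-- Upper bound h_q(p) − h₀(p) ≤ L₊|q|², where L₊ bounds the Hessian of ℓ from above. -/
theorem stmt_9 (ℓ : EuclideanSpace ℝ (Fin 3) → ℝ) (hpos : ∀ p, 0 < ℓ p)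
    (hC2 : ContDiff ℝ 2 ℓ) (Lplus : ℝ)
    (hL : ∀ p q : EuclideanSpace ℝ (Fin 3), ‖q‖ = 1 →
      fderiv ℝ (fderiv ℝ ℓ) p q q ≤ Lplus)
    (p q : EuclideanSpace ℝ (Fin 3)) :
    hSym ℓ q p - hSym ℓ 0 p ≤ Lplus * ‖q‖ ^ 2 := by
  have hL0 : 0 ≤ Lplus := nonneg_of_pos_of_fderiv_fderiv_le hC2 hpos hL
  have hdiff := second_diff_le_of_fderiv_fderiv_le hC2 p q
    fun x => (fderiv ℝ (fderiv ℝ ℓ) x).apply_self_le_mul_norm_sq (hL x) q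
  have hq : hSym ℓ q p ≤ (ℓ (p + q) + ℓ (p - q)) / 2 :=
    log_boseOcc_ratio_le_midpoint (hpos _) (hpos _)
  have hrhs : 0 ≤ Lplus * ‖q‖ ^ 2 := by positivity
  rw [hSym_zero (hpos p)]
  linarith
end

section
/- For every a > 0, b > 0: ln( (2 + ω_a + ω_b) / (ω_a + ω_b) ) ≤ (a + b)/2, where ω_x = (e^x − 1)^{−1}. Equivalently, the midpoint-convexity bound h ≤ ½(a+b) holds for the Bose function h = ln(1 + 2/(ω_a + ω_b)). -/
/-- For a, b > 0 with ω_x = (e^x − 1)⁻¹: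
ln((2 + ω_a + ω_b)/(ω_a + ω_b)) ≤ (a + b)/2. -/
theorem stmt_11 (a b : ℝ) (ha : 0 < a) (hb : 0 < b) :
    Real.log ((2 + (Real.exp a - 1)⁻¹ + (Real.exp b - 1)⁻¹) /
        ((Real.exp a - 1)⁻¹ + (Real.exp b - 1)⁻¹)) ≤ (a + b) / 2 := by
  set u := Real.exp (a / 2) with hu_def
  set v := Real.exp (b / 2) with hv_def
  have hu : 1 < u := by nlinarith [Real.add_one_le_exp (a/2)]
  have hv : 1 < v := by nlinarith [Real.add_one_le_exp (b/2)]
  have hea : Real.exp a = u ^ 2 := by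
    rw [hu_def, ← Real.exp_nat_mul]; ring_nf
  have heb : Real.exp b = v ^ 2 := by
    rw [hv_def, ← Real.exp_nat_mul]; ring_nf
  have hA : (0:ℝ) < u ^ 2 - 1 := by nlinarith
  have hB : (0:ℝ) < v ^ 2 - 1 := by nlinarith
  have hs : (0:ℝ) < (Real.exp a - 1)⁻¹ + (Real.exp b - 1)⁻¹ := by
    rw [hea, heb]; positivity
  have harg : (0:ℝ) < (2 + (Real.exp a - 1)⁻¹ + (Real.exp b - 1)⁻¹) /
      ((Real.exp a - 1)⁻¹ + (Real.exp b - 1)⁻¹) := by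
    apply div_pos (by linarith) hs
  rw [Real.log_le_iff_le_exp harg]
  have hexp : Real.exp ((a + b) / 2) = u * v := by
    rw [hu_def, hv_def, ← Real.exp_add]; ring_nf
  rw [hexp, hea, heb]
  have hs' : (0:ℝ) < (u ^ 2 - 1)⁻¹ + (v ^ 2 - 1)⁻¹ := by positivity
  rw [div_le_iff₀ hs', ← sub_nonneg]
  have key : u * v * ((u ^ 2 - 1)⁻¹ + (v ^ 2 - 1)⁻¹) - (2 + (u ^ 2 - 1)⁻¹ + (v ^ 2 - 1)⁻¹)
      = (u * v * (u ^ 2 + v ^ 2 - 2) - 2 * (u ^ 2 - 1) * (v ^ 2 - 1) - (u ^ 2 + v ^ 2 - 2))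
        / ((u ^ 2 - 1) * (v ^ 2 - 1)) := by
    field_simp
    ring
  rw [key]
  apply div_nonneg _ (le_of_lt (mul_pos hA hB))
  nlinarith [sq_nonneg (u - v), sq_nonneg (u*v - 1), mul_pos hA hB,
    sq_nonneg (u + v), sq_nonneg ((u - v) * (u*v - 1)), mul_pos (lt_trans one_pos hu) (lt_trans one_pos hv)]
end
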